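/- Let A be a subring of a commutative ring B, and let T = A + X·B[X] be the subring of B[X] of polynomials with constant coefficient in A. A polynomial f = a_0 + a_1X + … + a_nX^n ∈ T is a unit of T if and only if a_0 is a unit of A and a_1, a_2, …, a_n are nilpotent elements of B. -/

import Mathlib

/-- The polynomial composite `A + X·B[X]`: the subring of `B[X]` of polynomials
whose constant coefficient lies in `A`. -/
def Subring.composite {B : Type*} [CommRing B] (A : Subring B) : Subring (Polynomial B) where
  carrier := {f : Polynomial B | f.coeff 0 ∈ A}
  mul_mem' {f g} hf hg := by
    simp only [Set.mem_setOf_eq, Polynomial.mul_coeff_zero] at *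
    exact mul_mem hf hg
  one_mem' := by
    simp only [Set.mem_setOf_eq, Polynomial.coeff_one_zero]
    exact one_mem A
  add_mem' {f g} hf hg := by
    simp only [Set.mem_setOf_eq, Polynomial.coeff_add] at *
    exact add_mem hf hg
  zero_mem' := by
    simp only [Set.mem_setOf_eq, Polynomial.coeff_zero]
    exact zero_mem A
  neg_mem' {f} hf := by
    simp only [Set.mem_setOf_eq, Polynomial.coeff_neg] at *
    exact neg_mem hf

theorem Subring.mem_composite {B : Type*} [CommRing B] (A : Subring B) (f : Polynomial B) :
    f ∈ A.composite ↔ f.coeff 0 ∈ A := Iff.rfl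

/-!
Units of `B[X]` are the polynomials with unit constant term and nilpotent higher coefficients,
and taking constant coefficients is a ring map `A + X·B[X] → A`; this gives one direction.
Conversely, the inverse of `f` in `B[X]` has constant coefficient `a₀⁻¹ ∈ A`, so it already lies
in `A + X·B[X]`.
-/

namespace Subring

variable {B : Type*} [CommRing B] (A : Subring B)

theorem mem_of_mul_eq_one_of_isUnit {a b : B} (ha : a ∈ A) (hunit : IsUnit (⟨a, ha⟩ : A))
    (hab : a * b = 1) : b ∈ A := by
  obtain ⟨u, hu⟩ := hunit
  have hinv : ((u⁻¹ : Aˣ) : B) * a = 1 := by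
    have := congrArg Subtype.val u.inv_mul
    rwa [hu] at this
  rw [← left_inv_eq_right_inv hinv hab]
  exact (u⁻¹ : Aˣ).val.2

noncomputable def compositeConstantCoeff : A.composite →+* A :=
  (Polynomial.constantCoeff.comp A.composite.subtype).codRestrict A fun f => f.2

theorem isUnit_composite_of_isUnit {f : Polynomial B} (hf : f ∈ A.composite) (hB : IsUnit f)
    (h0 : IsUnit (⟨f.coeff 0, hf⟩ : A)) : IsUnit (⟨f, hf⟩ : A.composite) := by
  have hinv : (↑hB.unit⁻¹ : Polynomial B) ∈ A.composite := by
    refine A.mem_of_mul_eq_one_of_isUnit hf h0 ?_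
    rw [← Polynomial.mul_coeff_zero, hB.mul_val_inv, Polynomial.coeff_one_zero]
  exact IsUnit.of_mul_eq_one ⟨_, hinv⟩ (Subtype.ext hB.mul_val_inv)

end Subring

theorem composite_isUnit_iff {B : Type*} [CommRing B] (A : Subring B)
    (f : Polynomial B) (hf : f ∈ A.composite) :
    IsUnit (⟨f, hf⟩ : A.composite) ↔
      IsUnit (⟨f.coeff 0, (A.mem_composite f).mp hf⟩ : A) ∧
        ∀ i : ℕ, i ≠ 0 → IsNilpotent (f.coeff i) := by
  constructor
  · intro hT
    have hB : IsUnit f := hT.map A.composite.subtype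
    exact ⟨hT.map A.compositeConstantCoeff,
      (Polynomial.isUnit_iff_coeff_isUnit_isNilpotent.mp hB).2⟩
  · rintro ⟨h0, hnil⟩
    have hB : IsUnit f :=
      Polynomial.isUnit_iff_coeff_isUnit_isNilpotent.mpr ⟨h0.map A.subtype, hnil⟩
    exact A.isUnit_composite_of_isUnit hf hB h0
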